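/- arXiv:0812.2800 — 4 statements merged into one kernel-verified Lean document; each statement's English description precedes it below -/
import Mathlib

section
/- The Wehrl entropy of the Fock state |m⟩ equals 1 + m + log(m!) − m·ψ(m+1), i.e., −(1/π)∫_C Q_m(z) log Q_m(z) d²z = 1 + m + log(m!) − m·ψ(m+1), where ψ is the digamma function and Q_m(z) = (|z|^{2m}/m!)e^{-|z|²}. -/
open MeasureTheory Real Set Filter Asymptotics
open scoped Nat Topology

/-! The Husimi function `Q_m` depends on `z` only through `t = |z|²`, and `d²z / π` becomes `dt`
on `(0, ∞)`. Since `log Q_m = m log t - log m! - t`, the entropy integral splits into the Gamma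
integrals `∫ t^k e^{-t} dt = k!` and `∫ t^m e^{-t} log t dt = Γ'(m + 1) = m! (H_m - γ)`. -/

theorem Complex.integral_comp_norm_sq {E : Type*} [NormedAddCommGroup E] [NormedSpace ℝ E]
    (f : ℝ → E) : ∫ z : ℂ, f (‖z‖ ^ 2) = π • ∫ t in Ioi (0 : ℝ), f t := by
  have hball : volume.real (Metric.ball (0 : ℂ) 1) = π := by
    simp [measureReal_def, Complex.volume_ball]
  rw [integral_fun_norm_addHaar volume (fun r => f (r ^ 2)), Complex.finrank_real_complex, hball,
    ← integral_comp_rpow_Ioi_of_pos (g := f) two_pos]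
  simp only [mul_smul, integral_smul]
  norm_num [smul_comm π, two_smul]

theorem integral_pow_mul_exp_neg (n : ℕ) : ∫ t in Ioi (0 : ℝ), t ^ n * exp (-t) = n ! := by
  rw [← Real.Gamma_nat_eq_factorial, Real.Gamma_eq_integral (by positivity)]
  refine setIntegral_congr_fun measurableSet_Ioi fun t _ => ?_
  simp [mul_comm]

theorem integrableOn_pow_mul_exp_neg (n : ℕ) :
    IntegrableOn (fun t : ℝ => t ^ n * exp (-t)) (Ioi 0) := by
  refine (Real.GammaIntegral_convergent (s := n + 1) (by positivity)).congr_fun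
    (fun t _ => ?_) measurableSet_Ioi
  simp [mul_comm]

theorem Complex.integrableOn_cpow_mul_log_mul_exp_neg {s : ℂ} (hs : 0 < s.re) :
    IntegrableOn (fun t : ℝ => (t : ℂ) ^ (s - 1) * (Real.log t * Real.exp (-t))) (Ioi 0) := by
  refine (mellin_hasDerivAt_of_isBigO_rpow (E := ℂ) (a := s.re + 1) (b := 0)
    (f := fun t => (Real.exp (-t) : ℂ)) ?_ ?_ (lt_add_one _) ?_ hs).1
  · exact (by fun_prop : Continuous fun t : ℝ => (Real.exp (-t) : ℂ)).continuousOn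
      |>.locallyIntegrableOn measurableSet_Ioi
  · rw [← isBigO_norm_left]
    simp_rw [Complex.norm_real, isBigO_norm_left]
    simpa only [neg_one_mul] using (isLittleO_exp_neg_mul_rpow_atTop zero_lt_one _).isBigO
  · simp_rw [neg_zero, rpow_zero]
    refine isBigO_const_of_tendsto (?_ : Tendsto _ _ (𝓝 (1 : ℂ))) one_ne_zero
    rw [(by simp : (1 : ℂ) = Real.exp (-0))]
    exact (by fun_prop : Continuous fun t : ℝ => (Real.exp (-t) : ℂ)).continuousWithinAt

theorem integrableOn_pow_mul_exp_neg_mul_log (n : ℕ) :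
    IntegrableOn (fun t : ℝ => t ^ n * exp (-t) * log t) (Ioi 0) := by
  refine IntegrableOn.congr_fun
    (Complex.integrableOn_cpow_mul_log_mul_exp_neg (s := n + 1) (by simp; positivity)).re
    (fun t _ => ?_) measurableSet_Ioi
  rw [add_sub_cancel_right, Complex.cpow_natCast]
  norm_cast
  rw [RCLike.re_to_complex, Complex.ofReal_re]
  ring

theorem integral_pow_mul_exp_neg_mul_log (n : ℕ) :
    ∫ t in Ioi (0 : ℝ), t ^ n * exp (-t) * log t =
      n ! * (harmonic n - eulerMascheroniConstant) := by
  have hs : 0 < ((n : ℂ) + 1).re := by simp; positivity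
  have hGamma : Complex.Gamma =ᶠ[𝓝 ((n : ℂ) + 1)] Complex.GammaIntegral := by
    filter_upwards [(isOpen_lt continuous_const Complex.continuous_re).mem_nhds hs] with s hs
      using Complex.Gamma_eq_integral hs
  have hderiv := ((Complex.hasDerivAt_Gamma_nat n).congr_of_eventuallyEq hGamma.symm).unique
    (Complex.hasDerivAt_GammaIntegral hs)
  apply Complex.ofReal_injective
  rw [← integral_complex_ofReal]
  push_cast
  rw [← sub_eq_neg_add] at hderiv
  rw [hderiv]
  refine setIntegral_congr_fun measurableSet_Ioi fun t _ => ?_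
  simp only [add_sub_cancel_right, Complex.cpow_natCast]
  push_cast
  ring

/-- `Q_m(z) = fockHusimi m ‖z‖²`. -/
noncomputable def fockHusimi (m : ℕ) (t : ℝ) : ℝ := t ^ m / m ! * exp (-t)

theorem log_fockHusimi (m : ℕ) {t : ℝ} (ht : 0 < t) :
    log (fockHusimi m t) = m * log t - log m ! - t := by
  rw [fockHusimi, log_mul (by positivity) (exp_ne_zero _), log_div (by positivity) (by positivity),
    log_pow, log_exp]
  ring

theorem integral_fockHusimi_mul_log (m : ℕ) :
    ∫ t in Ioi (0 : ℝ), fockHusimi m t * log (fockHusimi m t) =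
      m * (harmonic m - eulerMascheroniConstant) - log m ! - (m + 1) := by
  have hA := (integrableOn_pow_mul_exp_neg_mul_log m).const_mul ((m : ℝ) / m !)
  have hB := (integrableOn_pow_mul_exp_neg m).const_mul (log m ! / m !)
  have hC := (integrableOn_pow_mul_exp_neg (m + 1)).const_mul (1 / m ! : ℝ)
  calc _ = ∫ t in Ioi (0 : ℝ), (m / m ! * (t ^ m * exp (-t) * log t)
          - log m ! / m ! * (t ^ m * exp (-t))) - 1 / m ! * (t ^ (m + 1) * exp (-t)) :=
        setIntegral_congr_fun measurableSet_Ioi fun t ht => by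
          rw [log_fockHusimi m ht, fockHusimi]
          field_simp
          ring
    _ = _ := by
      rw [integral_sub (by exact hA.sub hB) hC, integral_sub hA hB, integral_const_mul,
        integral_const_mul, integral_const_mul, integral_pow_mul_exp_neg_mul_log,
        integral_pow_mul_exp_neg, integral_pow_mul_exp_neg, Nat.factorial_succ]
      push_cast
      field_simp

/-- The Wehrl entropy of the Fock state `|m⟩` equals
`1 + m + log(m!) - m ψ(m+1)` where `ψ(m+1) = H_m - γ`. -/
theorem wehrl_entropy_fock (m : ℕ) :
    -(1 / π) * ∫ z : ℂ,
        (‖z‖ ^ (2 * m) / (m.factorial : ℝ) * Real.exp (-‖z‖ ^ 2)) *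
          Real.log (‖z‖ ^ (2 * m) / (m.factorial : ℝ) * Real.exp (-‖z‖ ^ 2)) =
      1 + m + Real.log (m.factorial : ℝ)
        - m * ((harmonic m : ℝ) - Real.eulerMascheroniConstant) := by
  have hQ (z : ℂ) :
      ‖z‖ ^ (2 * m) / m ! * exp (-‖z‖ ^ 2) = fockHusimi m (‖z‖ ^ 2) := by
    rw [fockHusimi, pow_mul]
  simp_rw [hQ]
  rw [Complex.integral_comp_norm_sq (fun t => fockHusimi m t * log (fockHusimi m t)), smul_eq_mul,
    integral_fockHusimi_mul_log]
  field_simp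
  ring
end

section
/- The non-Gaussianity of the Fock state, N(m) = log(m+1) − m − log(m!) + m·ψ(m+1) with ψ(m+1) = H_m − γ, is nonnegative for all nonnegative integers m, and equals 0 when m = 0. -/
/-!
`N(m+1) - N(m) = log(m+2) - 2 log(m+1) + ψ(m+1)`, and since `N(0) = 0` it suffices that
`ψ(m+1) = H_m - γ ≥ log((m+1)^2 / (m+2))`. Since `(m+1)^2 ≤ (m+2)(m+1/2)`, this follows from
`H_m - γ ≥ log(m+1/2)`: the sequence `H_m - log(m+1/2)` decreases to `γ`, because
`log(1 + 1/(m+1/2)) ≥ 1/(m+1)` by the first term of the series `log((1+x)/(1-x)) = 2 ∑ x^(2k+1)/(2k+1)`.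
-/

open Real Filter

namespace Real

lemma two_div_two_mul_add_one_le_log_one_add_inv {a : ℝ} (ha : 0 < a) :
    2 / (2 * a + 1) ≤ log (1 + a⁻¹) := by
  have h := le_hasSum (hasSum_log_one_add_inv ha) 0 fun k _ => by positivity
  norm_num at h
  rwa [div_eq_mul_inv]

lemma antitone_harmonic_sub_log_add_half :
    Antitone fun n : ℕ => (harmonic n : ℝ) - log (n + 1 / 2) := by
  refine antitone_nat_of_succ_le fun n => ?_
  have hgap := two_div_two_mul_add_one_le_log_one_add_inv (a := (n : ℝ) + 1 / 2) (by positivity)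
  have hsplit : log ((n : ℝ) + 1 + 1 / 2) = log (n + 1 / 2) + log (1 + ((n : ℝ) + 1 / 2)⁻¹) := by
    rw [← log_mul (by positivity) (by positivity)]
    congr 1
    field_simp
    ring
  have htwo : 2 / (2 * ((n : ℝ) + 1 / 2) + 1) = ((n : ℝ) + 1)⁻¹ := by
    field_simp
    ring
  rw [harmonic_succ]
  push_cast
  linarith

lemma tendsto_harmonic_sub_log_add_half :
    Tendsto (fun n : ℕ => (harmonic n : ℝ) - log (n + 1 / 2)) atTop (nhds eulerMascheroniConstant) := by
  refine tendsto_of_tendsto_of_tendsto_of_le_of_le' tendsto_eulerMascheroniSeq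
    tendsto_eulerMascheroniSeq' (Eventually.of_forall fun n => ?_) ?_
  · simp only [eulerMascheroniSeq]
    gcongr
    linarith
  · filter_upwards [eventually_ge_atTop 1] with n hn
    have hn' : (1 : ℝ) ≤ n := by exact_mod_cast hn
    rw [eulerMascheroniSeq', if_neg (by omega)]
    gcongr
    linarith

lemma eulerMascheroniConstant_le_harmonic_sub_log_add_half (n : ℕ) :
    eulerMascheroniConstant ≤ harmonic n - log (n + 1 / 2) :=
  antitone_harmonic_sub_log_add_half.le_of_tendsto tendsto_harmonic_sub_log_add_half n

end Real

noncomputable def fockNonGaussianity (m : ℕ) : ℝ :=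
  log (m + 1) - m - log (m.factorial : ℝ) + m * ((harmonic m : ℝ) - eulerMascheroniConstant)

lemma fockNonGaussianity_zero : fockNonGaussianity 0 = 0 := by
  simp [fockNonGaussianity]

lemma fockNonGaussianity_succ_sub (m : ℕ) :
    fockNonGaussianity (m + 1) - fockNonGaussianity m
      = log (m + 2) - 2 * log (m + 1) + harmonic m - eulerMascheroniConstant := by
  have hlog_fact : log ((m + 1).factorial : ℝ) = log (m.factorial : ℝ) + log (m + 1) := by
    rw [Nat.factorial_succ, Nat.cast_mul, log_mul (by positivity) (by positivity)]
    push_cast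
    ring
  simp only [fockNonGaussianity, hlog_fact, harmonic_succ]
  push_cast
  field_simp
  ring_nf

lemma two_mul_log_add_one_le (m : ℕ) :
    2 * log ((m : ℝ) + 1) ≤ log (m + 2) + log (m + 1 / 2) := by
  rw [← Nat.cast_ofNat, ← log_pow, ← log_mul (by positivity) (by positivity)]
  gcongr
  nlinarith [(Nat.cast_nonneg m : (0 : ℝ) ≤ m)]

lemma monotone_fockNonGaussianity : Monotone fockNonGaussianity := by
  refine monotone_nat_of_le_succ fun m => sub_nonneg.mp ?_
  rw [fockNonGaussianity_succ_sub]
  linarith [two_mul_log_add_one_le m, eulerMascheroniConstant_le_harmonic_sub_log_add_half m]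

/-- The non-Gaussianity `N(m) = log(m+1) - m - log(m!) + m(H_m - γ)` of the
Fock state is nonnegative for all `m`, and equals `0` for `m = 0`. -/
theorem fock_nonGaussianity_nonneg :
    (∀ m : ℕ, 0 ≤ Real.log (m + 1) - m - Real.log (m.factorial : ℝ)
        + m * ((harmonic m : ℝ) - Real.eulerMascheroniConstant)) ∧
    Real.log ((0 : ℕ) + 1) - (0 : ℕ) - Real.log ((0 : ℕ).factorial : ℝ)
        + (0 : ℕ) * ((harmonic 0 : ℝ) - Real.eulerMascheroniConstant) = 0 :=
  ⟨fun m => fockNonGaussianity_zero ▸ monotone_fockNonGaussianity m.zero_le,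
    fockNonGaussianity_zero⟩
end

section
/- The Fock-state non-Gaussianity N(m) = log(m+1) − m − log(m!) + m(H_m − γ) is strictly increasing in m. -/
/-!
The increment is `N(m+1) - N(m) = log(m+2) - 2 log(m+1) + H_m - γ`. DeTemple's sequence
`H_m - log(m + 1/2)` strictly decreases to `γ`: its decrement `log(1 + 1/a) - 1/(m+1)`, with
`a = m + 1/2`, is the positive tail of the series `log(1 + 1/a) = ∑ 2/(2k+1) (2a+1)^{-(2k+1)}`.
Hence `H_m - γ > log(m + 1/2)`, and `(m + 1/2)(m + 2) ≥ (m + 1)^2` finishes.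
-/

open Real Filter Topology

theorem two_div_two_mul_add_one_lt_log_one_add_inv {a : ℝ} (ha : 0 < a) :
    2 / (2 * a + 1) < log (1 + a⁻¹) := by
  have hle :=
    sum_le_hasSum (Finset.range 2) (fun k _ => by positivity) (hasSum_log_one_add_inv ha)
  rw [Finset.sum_range_succ, Finset.sum_range_one] at hle
  have hfirst :
      (2 : ℝ) * (1 / (2 * (0 : ℕ) + 1)) * (1 / (2 * a + 1)) ^ (2 * 0 + 1) = 2 / (2 * a + 1) := by
    norm_num
    ring
  have hsecond : 0 < (2 : ℝ) * (1 / (2 * (1 : ℕ) + 1)) * (1 / (2 * a + 1)) ^ (2 * 1 + 1) := by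
    positivity
  linarith

noncomputable def deTempleSeq (n : ℕ) : ℝ := harmonic n - log (n + 1 / 2)

theorem strictAnti_deTempleSeq : StrictAnti deTempleSeq := by
  refine strictAnti_nat_of_succ_lt fun n => ?_
  have hstep := two_div_two_mul_add_one_lt_log_one_add_inv (a := n + 1 / 2) (by positivity)
  have hsplit :
      log ((n + 1 : ℕ) + 1 / 2 : ℝ) = log (n + 1 / 2) + log (1 + (n + 1 / 2 : ℝ)⁻¹) := by
    rw [← log_mul (by positivity) (by positivity)]
    congr 1
    field_simp
    push_cast
    ring
  have hdiv : (2 : ℝ) / (2 * (n + 1 / 2) + 1) = (n + 1 : ℝ)⁻¹ := by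
    field_simp
    ring
  rw [deTempleSeq, deTempleSeq, harmonic_succ, hsplit]
  push_cast
  linarith

theorem tendsto_deTempleSeq : Tendsto deTempleSeq atTop (𝓝 eulerMascheroniConstant) := by
  have hshift :
      Tendsto (fun n : ℕ => log ((n + 1 / 2 : ℝ) + 1 / 2) - log (n + 1 / 2)) atTop (𝓝 0) :=
    (tendsto_log_comp_add_sub_log _).comp
      (tendsto_atTop_add_const_right _ _ tendsto_natCast_atTop_atTop)
  convert tendsto_harmonic_sub_log_add_one.add hshift using 1
  · ext n
    rw [deTempleSeq]
    ring_nf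
  · simp

theorem eulerMascheroniConstant_lt_deTempleSeq (n : ℕ) :
    eulerMascheroniConstant < deTempleSeq n :=
  (strictAnti_deTempleSeq.antitone.le_of_tendsto tendsto_deTempleSeq (n + 1)).trans_lt
    (strictAnti_deTempleSeq n.lt_succ_self)

/-- The Fock-state non-Gaussianity
`N(m) = log(m+1) - m - log(m!) + m(H_m - γ)` is strictly increasing in `m`. -/
theorem fock_nonGaussianity_strictMono :
    StrictMono (fun m : ℕ =>
      Real.log (m + 1) - m - Real.log (m.factorial : ℝ)
        + m * ((harmonic m : ℝ) - Real.eulerMascheroniConstant)) := by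
  refine strictMono_nat_of_lt_succ fun n => ?_
  have hγ := eulerMascheroniConstant_lt_deTempleSeq n
  have hlog : log (((n : ℝ) + 1) ^ 2) ≤ log (((n : ℝ) + 1 / 2) * ((n : ℝ) + 1 + 1)) :=
    log_le_log (by positivity) (by nlinarith)
  rw [log_pow, log_mul (by positivity) (by positivity)] at hlog
  have hfact : log ((n + 1).factorial : ℝ) = log ((n : ℝ) + 1) + log (n.factorial : ℝ) := by
    rw [Nat.factorial_succ, Nat.cast_mul, log_mul (by positivity) (by positivity)]
    push_cast
    rfl
  have hinv : ((n : ℝ) + 1) * ((n : ℝ) + 1)⁻¹ = 1 := mul_inv_cancel₀ (by positivity)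
  rw [deTempleSeq] at hγ
  simp only [hfact, harmonic_succ, Nat.cast_add, Nat.cast_one, Rat.cast_add, Rat.cast_inv,
    Rat.cast_natCast, Rat.cast_one]
  linarith
end

section
/- The Wehrl entropy of the photon-added thermal state differs from that of the Fock state by log(1−x): −(1/π)∫ Q^{(m,x)} log Q^{(m,x)} d²z = [1 + m + log(m!) − m·ψ(m+1)] − log(1−x), where Q^{(m,x)}(z) = ((1−x)^{m+1}/m!)|z|^{2m}e^{−(1−x)|z|²}. -/
/-!
In the variable `t = (1 - x)‖z‖²` the Husimi function becomes `(1 - x) / m! · tᵐ e⁻ᵗ`, and polar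
coordinates turn `d²z / π` into `d(‖z‖²)`. The entropy is thus a one-dimensional integral against
the Gamma density, whose logarithm splits into the logarithm of the constant, `m log t` and `-t`.
Their moments are `m!`, `Γ'(m + 1) = m! (H_m - γ)` and `(m + 1)!`.
-/

open MeasureTheory Real Set Filter Asymptotics

theorem integral_fun_norm_sq_complex {E : Type*} [NormedAddCommGroup E] [NormedSpace ℝ E]
    (f : ℝ → E) : ∫ z : ℂ, f (‖z‖ ^ 2) = π • ∫ t in Ioi 0, f t := by
  have hsub := integral_comp_rpow_Ioi_of_pos (g := f) (p := 2) two_pos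
  norm_num [rpow_two, mul_smul, integral_smul] at hsub
  rw [integral_fun_norm_addHaar volume (fun y => f (y ^ 2)), ← hsub]
  simp only [Complex.finrank_real_complex, measureReal_def, Complex.volume_ball]
  norm_num [smul_comm π, ← ofNat_smul_eq_nsmul ℝ]

theorem integral_pow_mul_exp_neg_Ioi (k : ℕ) :
    ∫ t in Ioi 0, t ^ k * exp (-t) = k.factorial := by
  rw [← Gamma_nat_eq_factorial, Gamma_eq_integral (by positivity)]
  refine setIntegral_congr_fun measurableSet_Ioi fun t _ => ?_
  rw [add_sub_cancel_right, rpow_natCast, mul_comm]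

theorem integrableOn_pow_mul_exp_neg_Ioi (k : ℕ) :
    IntegrableOn (fun t : ℝ => t ^ k * exp (-t)) (Ioi 0) := by
  refine (integrableOn_congr_fun (fun t _ => ?_) measurableSet_Ioi).mpr
    (GammaIntegral_convergent (s := k + 1) (by positivity))
  rw [add_sub_cancel_right, rpow_natCast, mul_comm]

theorem integrableOn_rpow_mul_exp_neg_mul_log_Ioi {s : ℝ} (hs : 0 < s) :
    IntegrableOn (fun t : ℝ => t ^ (s - 1) * exp (-t) * log t) (Ioi 0) := by
  have hmellin : MellinConvergent (fun t => log t • ((exp (-t) : ℝ) : ℂ)) s := by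
    refine (mellin_hasDerivAt_of_isBigO_rpow (E := ℂ) ?_ ?_ (lt_add_one _) ?_ hs).1
    · exact (Continuous.continuousOn (by fun_prop)).locallyIntegrableOn measurableSet_Ioi
    · rw [← isBigO_norm_left]
      simp_rw [Complex.norm_real, isBigO_norm_left]
      simpa only [neg_one_mul] using (isLittleO_exp_neg_mul_rpow_atTop zero_lt_one _).isBigO
    · simp_rw [neg_zero, rpow_zero]
      refine isBigO_const_of_tendsto (?_ : Tendsto _ _ (nhds (1 : ℂ))) one_ne_zero
      rw [(by simp : (1 : ℂ) = Real.exp (-0))]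
      exact (Complex.continuous_ofReal.comp
        (continuous_exp.comp continuous_neg)).continuousWithinAt
  refine IntegrableOn.congr_fun (s := Ioi 0) hmellin.re (fun t ht => ?_) measurableSet_Ioi
  simp only [Complex.real_smul, smul_eq_mul]
  rw [← Complex.ofReal_one, ← Complex.ofReal_sub, ← Complex.ofReal_cpow (le_of_lt ht),
    ← Complex.ofReal_mul, ← Complex.ofReal_mul, RCLike.re_to_complex, Complex.ofReal_re]
  ring

/-- Differentiation of `Γ(s) = ∫ tˢ⁻¹ e⁻ᵗ dt` under the integral sign at `s = m + 1`. -/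
theorem integral_pow_mul_exp_neg_mul_log_Ioi (m : ℕ) :
    ∫ t in Ioi 0, t ^ m * exp (-t) * log t
      = m.factorial * (harmonic m - eulerMascheroniConstant) := by
  have hre : 0 < ((m : ℂ) + 1).re := by simp; positivity
  have hGamma : Complex.Gamma =ᶠ[nhds ((m : ℂ) + 1)] Complex.GammaIntegral := by
    filter_upwards [(isOpen_lt continuous_const Complex.continuous_re).mem_nhds hre] with s hs
    exact Complex.Gamma_eq_integral hs
  have hderiv := (Complex.hasDerivAt_GammaIntegral hre).unique
    ((Complex.hasDerivAt_Gamma_nat m).congr_of_eventuallyEq hGamma.symm)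
  have hintegrand : ∀ t ∈ Ioi (0 : ℝ), (t : ℂ) ^ ((m : ℂ) + 1 - 1) * (log t * exp (-t))
      = ((t ^ m * exp (-t) * log t : ℝ) : ℂ) := fun t _ => by
    rw [add_sub_cancel_right, Complex.cpow_natCast]
    push_cast
    ring
  rw [setIntegral_congr_fun measurableSet_Ioi hintegrand, integral_complex_ofReal] at hderiv
  rw [sub_eq_neg_add]
  exact_mod_cast hderiv

theorem integral_mul_log_const_mul_pow_mul_exp_neg_Ioi {a : ℝ} (ha : 0 < a) (m : ℕ) :
    ∫ t in Ioi 0, a * t ^ m * exp (-t) * log (a * t ^ m * exp (-t))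
      = a * m.factorial * (log a + m * (harmonic m - eulerMascheroniConstant) - (m + 1)) := by
  have hsplit : ∀ t ∈ Ioi (0 : ℝ), a * t ^ m * exp (-t) * log (a * t ^ m * exp (-t))
      = a * (log a * (t ^ m * exp (-t)) + m * (t ^ m * exp (-t) * log t)
          - t ^ (m + 1) * exp (-t)) := fun t ht => by
    have ht : 0 < t := ht
    rw [log_mul (by positivity) (exp_pos _).ne', log_mul ha.ne' (by positivity), log_exp, log_pow]
    ring
  have hlog : IntegrableOn (fun t : ℝ => t ^ m * exp (-t) * log t) (Ioi 0) := by
    refine (integrableOn_congr_fun (fun t _ => ?_) measurableSet_Ioi).mp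
      (integrableOn_rpow_mul_exp_neg_mul_log_Ioi (s := m + 1) (by positivity))
    rw [add_sub_cancel_right, rpow_natCast]
  have hpow := (integrableOn_pow_mul_exp_neg_Ioi m).const_mul (log a)
  have hlog' := hlog.const_mul (m : ℝ)
  have hsum : IntegrableOn (fun t => log a * (t ^ m * exp (-t)) + m * (t ^ m * exp (-t) * log t))
      (Ioi 0) := hpow.add hlog'
  rw [setIntegral_congr_fun measurableSet_Ioi hsplit, integral_const_mul,
    integral_sub hsum (integrableOn_pow_mul_exp_neg_Ioi (m + 1)), integral_add hpow hlog',
    integral_const_mul, integral_const_mul, integral_pow_mul_exp_neg_Ioi,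
    integral_pow_mul_exp_neg_mul_log_Ioi, integral_pow_mul_exp_neg_Ioi, Nat.factorial_succ]
  push_cast
  ring

theorem wehrl_entropy_pats_general (m : ℕ) (x : ℝ) (hx1 : x < 1) :
    -(1 / π) * ∫ z : ℂ,
        ((1 - x) ^ (m + 1) / (m.factorial : ℝ) * ‖z‖ ^ (2 * m)
            * Real.exp (-(1 - x) * ‖z‖ ^ 2)) *
          Real.log ((1 - x) ^ (m + 1) / (m.factorial : ℝ) * ‖z‖ ^ (2 * m)
            * Real.exp (-(1 - x) * ‖z‖ ^ 2)) =
      (1 + m + Real.log (m.factorial : ℝ)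
          - m * ((harmonic m : ℝ) - Real.eulerMascheroniConstant))
        - Real.log (1 - x) := by
  set c := 1 - x
  have hc : 0 < c := sub_pos.mpr hx1
  have hfact : (0 : ℝ) < m.factorial := by positivity
  set Q : ℝ → ℝ := fun t => c / m.factorial * t ^ m * exp (-t)
  have hradial : ∀ z : ℂ, c ^ (m + 1) / (m.factorial : ℝ) * ‖z‖ ^ (2 * m) * exp (-c * ‖z‖ ^ 2)
      = Q (c * ‖z‖ ^ 2) := fun z => by
    simp only [Q, pow_mul, mul_pow, pow_succ, neg_mul]
    ring
  simp_rw [hradial]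
  rw [integral_fun_norm_sq_complex (fun s => Q (c * s) * log (Q (c * s))),
    integral_comp_mul_left_Ioi (fun t => Q t * log (Q t)) 0 hc, mul_zero,
    integral_mul_log_const_mul_pow_mul_exp_neg_Ioi (by positivity), log_div hc.ne' hfact.ne']
  simp only [smul_eq_mul]
  field_simp
  ring

/-- The Wehrl entropy of the photon-added thermal state differs from that of
the Fock state by `log(1-x)`. -/
theorem wehrl_entropy_pats (m : ℕ) (x : ℝ) (hx0 : 0 ≤ x) (hx1 : x < 1) :
    -(1 / π) * ∫ z : ℂ,
        ((1 - x) ^ (m + 1) / (m.factorial : ℝ) * ‖z‖ ^ (2 * m)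
            * Real.exp (-(1 - x) * ‖z‖ ^ 2)) *
          Real.log ((1 - x) ^ (m + 1) / (m.factorial : ℝ) * ‖z‖ ^ (2 * m)
            * Real.exp (-(1 - x) * ‖z‖ ^ 2)) =
      (1 + m + Real.log (m.factorial : ℝ)
          - m * ((harmonic m : ℝ) - Real.eulerMascheroniConstant))
        - Real.log (1 - x) :=
  wehrl_entropy_pats_general m x hx1
end
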